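/- For H > 1/2 and c ∈ (0,1], with k = 2H + (c-1)(4H²-1)/(4H), one has c·(4H²-1)/(4H) · π/√(k²-1) < π, i.e., the helicoid pitch condition c·(4H²-1)/(4H) < √(k²-1) holds. -/
import Mathlib


/-- For `H > 1/2` and `c ∈ (0,1]`, with `k = 2H + (c-1)(4H²-1)/(4H)`, the pitch condition
`c(4H²-1)/(4H) < √(k²-1)` holds, i.e. `c(4H²-1)/(4H)·π/√(k²-1) < π`. -/
theorem helicoid_pitch_condition (H c : ℝ) (hH : H > 1/2) (hc : c ∈ Set.Ioc (0:ℝ) 1) :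
    c * (4*H^2 - 1) / (4*H) <
      Real.sqrt ((2*H + (c - 1) * (4*H^2 - 1) / (4*H))^2 - 1) ∧
    c * (4*H^2 - 1) / (4*H) * Real.pi /
      Real.sqrt ((2*H + (c - 1) * (4*H^2 - 1) / (4*H))^2 - 1) < Real.pi := by
  obtain ⟨hc0, hc1⟩ := hc
  have hv : (0:ℝ) < 4*H := by linarith
  have hu : (0:ℝ) < 4*H^2 - 1 := by nlinarith
  have ha : 0 ≤ c * (4*H^2 - 1) / (4*H) :=
    div_nonneg (mul_nonneg hc0.le hu.le) hv.le
  have key : (c * (4*H^2 - 1) / (4*H))^2 < (2*H + (c - 1) * (4*H^2 - 1) / (4*H))^2 - 1 := by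
    rw [div_pow, div_lt_iff₀ (by positivity), sub_mul]
    have h : 2*H + (c - 1) * (4*H^2 - 1) / (4*H) = (8*H^2 + (c-1)*(4*H^2-1)) / (4*H) := by
      field_simp; ring
    rw [h, div_pow, div_mul_cancel₀ _ (by positivity)]
    nlinarith [mul_pos hc0 hu, sq_nonneg (4*H^2-1), mul_pos (mul_pos hc0 hu) (show (0:ℝ) < 4*H^2+1 by nlinarith)]
  have h1 : c * (4*H^2 - 1) / (4*H) <
      Real.sqrt ((2*H + (c - 1) * (4*H^2 - 1) / (4*H))^2 - 1) :=
    (Real.lt_sqrt ha).mpr key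
  refine ⟨h1, ?_⟩
  have hs : 0 < Real.sqrt ((2*H + (c - 1) * (4*H^2 - 1) / (4*H))^2 - 1) :=
    lt_of_le_of_lt ha h1
  rw [div_lt_iff₀ hs]
  nlinarith [Real.pi_pos, h1]
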